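/- arXiv:1512.04905 — 5 statements merged into one kernel-verified Lean document; each statement's English description precedes it below -/
import Mathlib

section
/- The complex Waring rank of the cubic form A = x₀(x₀² + x₁² + … + xₙ²) ∈ ℂ[x₀,…,xₙ] is at most 2n, i.e., A can be written as a sum of 2n cubes of complex linear forms. -/
open MvPolynomial Finset

/-- `L` is a linear form (a `ℂ`-linear combination of the variables). -/
def IsLinearForm {n : ℕ} (L : MvPolynomial (Fin (n + 1)) ℂ) : Prop :=
  ∃ a : Fin (n + 1) → ℂ, L = ∑ i, C (a i) * X i

lemma sum_range_two_mul' {M} [AddCommMonoid M] (n : ℕ) (f : ℕ → M) :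
    ∑ k ∈ Finset.range (2*n), f k = ∑ i ∈ Finset.range n, (f (2*i) + f (2*i+1)) := by
  induction n with
  | zero => simp
  | succ m ih =>
    rw [Nat.mul_succ, Finset.sum_range_succ, Finset.sum_range_succ,
      Finset.sum_range_succ, ← ih]
    abel

lemma linform {n : ℕ} (c d : ℂ) (i j : Fin (n+1)) (hij : i ≠ j) :
    ∃ a : Fin (n + 1) → ℂ, C c * X i + C d * X j = ∑ t, C (a t) * X t := by
  refine ⟨fun t => (if t = i then c else 0) + (if t = j then d else 0), ?_⟩
  have : ∀ t : Fin (n+1), C ((if t = i then c else 0) + (if t = j then d else 0)) * X t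
      = (if t = i then C c * X t else 0) + (if t = j then C d * X t else 0) := by
    intro t; split_ifs <;> simp_all
  rw [Finset.sum_congr rfl fun t _ => this t, Finset.sum_add_distrib,
    Finset.sum_ite_eq' _ i, Finset.sum_ite_eq' _ j]
  simp

theorem stmt_5 (n : ℕ) (hn : 1 ≤ n) :
    ∃ L : Fin (2 * n) → MvPolynomial (Fin (n + 1)) ℂ, (∀ k, IsLinearForm (L k)) ∧
      X 0 * (∑ i, X i ^ 2) = ∑ k, L k ^ 3 := by
  have hn0 : (n : ℂ) ≠ 0 := Nat.cast_ne_zero.mpr (by omega)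
  obtain ⟨a, ha⟩ := IsAlgClosed.exists_pow_nat_eq ((2 * (n : ℂ))⁻¹) (n := 3) (by norm_num)
  have ha0 : a ≠ 0 := by
    intro h; rw [h] at ha
    simp only [zero_pow, ne_eq, OfNat.ofNat_ne_zero, not_false_iff] at ha
    exact (inv_ne_zero (by simp [hn0])) ha.symm
  obtain ⟨b, hb⟩ := IsAlgClosed.exists_pow_nat_eq ((6 * a)⁻¹) (n := 2) (by norm_num)
  -- index function
  have hidx : ∀ k : ℕ, k / 2 % n < n := fun k => Nat.mod_lt _ (by omega)
  set idx : ℕ → Fin (n+1) := fun k => Fin.succ ⟨k / 2 % n, hidx k⟩ with hidxdef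
  set M : ℕ → MvPolynomial (Fin (n+1)) ℂ :=
    fun k => C a * X 0 + C ((-1)^k * b) * X (idx k) with hM
  refine ⟨fun k => M k.val, fun k => linform _ _ _ _ (Fin.succ_ne_zero _).symm, ?_⟩
  have key : ∀ j : Fin (n+1), (C a * X 0 + C b * X j)^3 + (C a * X 0 + C (-b) * X j)^3
      = C (2 * a^3) * X 0 ^ 3 + C (6 * a * b^2) * (X 0 * X j ^ 2) := by
    intro j
    simp only [map_mul, map_pow, map_neg, map_ofNat]
    ring
  have hab : (6 : ℂ) * a * b^2 = 1 := by
    rw [hb]; field_simp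
  calc X 0 * (∑ i, X i ^ 2)
      = X 0 ^ 3 + ∑ i : Fin n, X 0 * X i.succ ^ 2 := by
        rw [Finset.mul_sum, Fin.sum_univ_succ]; ring_nf
    _ = ∑ i ∈ Finset.range n, (C (2*a^3) * X 0 ^ 3 + X 0 * X (idx (2*i)) ^ 2) := by
        rw [Finset.sum_add_distrib, Finset.sum_const, Finset.card_range, nsmul_eq_mul]
        have h1 : (n : MvPolynomial (Fin (n+1)) ℂ) * (C (2*a^3) * X 0 ^ 3) = X 0 ^ 3 := by
          rw [← map_natCast (C : ℂ →+* MvPolynomial (Fin (n+1)) ℂ), ← mul_assoc, ← map_mul, ha]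
          rw [show (n : ℂ) * (2 * (2 * (n:ℂ))⁻¹) = 1 by field_simp]
          simp
        rw [h1]
        congr 1
        rw [← Fin.sum_univ_eq_sum_range]
        refine Finset.sum_congr rfl fun i _ => ?_
        have hx : idx (2*i) = i.succ := by
          simp only [hidxdef]
          ext
          simp [Nat.mul_div_cancel_left _ (by norm_num : 0 < 2), Nat.mod_eq_of_lt i.isLt]
        rw [hx]
    _ = ∑ k : Fin (2*n), M k.val ^ 3 := by
        rw [Fin.sum_univ_eq_sum_range (fun k => M k ^ 3), sum_range_two_mul']
        refine Finset.sum_congr rfl fun i hi => ?_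
        have hdiv : (2*i+1)/2 = i := by omega
        have hdiv2 : (2*i)/2 = i := by omega
        have hidxeq : idx (2*i+1) = idx (2*i) := by simp [hidxdef, hdiv, hdiv2]
        have h2 : ((-1:ℂ))^(2*i) * b = b := by rw [pow_mul]; norm_num
        have h3 : ((-1:ℂ))^(2*i+1) * b = -b := by rw [pow_succ, pow_mul]; norm_num
        simp only [hM]
        rw [hidxeq, h2, h3, key (idx (2*i)), hab]
        simp
end

section
/- The complex Waring rank of the cubic form B = x₀(x₁² + x₂² + … + xₙ²) ∈ ℂ[x₀,…,xₙ] is at most 2n, i.e., B can be written as a sum of 2n cubes of complex linear forms. -/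
open MvPolynomial

/-- A polynomial of the form `C A * X z0 + C B * X z1` with `z0 ≠ z1` is a linear form. -/
lemma isLinearForm_two {n : ℕ} (z0 z1 : Fin (n + 1)) (h : z0 ≠ z1) (A B : ℂ) :
    IsLinearForm (C A * X z0 + C B * X z1) := by
  refine ⟨fun j => if j = z0 then A else if j = z1 then B else 0, ?_⟩
  have key : ∀ j : Fin (n + 1),
      C (if j = z0 then A else if j = z1 then B else 0) * X j
        = (if j = z0 then C A * X z0 else 0) + (if j = z1 then C B * X z1 else 0) := by
    intro j
    by_cases h0 : j = z0
    · subst h0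
      simp [if_neg (Ne.symm h ·)]
      intro hj; exact absurd hj h
    · by_cases h1 : j = z1
      · subst h1; simp [h0]
      · simp [h0, h1]
  rw [Finset.sum_congr rfl fun j _ => key j, Finset.sum_add_distrib,
    Finset.sum_ite_eq' Finset.univ z0, Finset.sum_ite_eq' Finset.univ z1]
  simp

theorem stmt_6 (n : ℕ) (hn : 2 ≤ n) :
    ∃ L : Fin (2 * n) → MvPolynomial (Fin (n + 1)) ℂ, (∀ k, IsLinearForm (L k)) ∧
      X 0 * (∑ i : Fin (n + 1), if i = 0 then 0 else X i ^ 2) = ∑ k, L k ^ 3 := by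
  -- choose constants
  obtain ⟨m, rfl⟩ : ∃ m, n = m + 2 := ⟨n - 2, by omega⟩
  set n := m + 2 with hn2
  obtain ⟨t, ht⟩ := IsAlgClosed.exists_pow_nat_eq (k := ℂ) (-((m : ℂ) + 1)) (n := 3) (by norm_num)
  have hm1 : ((m : ℂ) + 1) ≠ 0 := by exact_mod_cast m.succ_ne_zero
  have ht0 : t ≠ 0 := by
    intro h
    apply hm1
    rw [h] at ht
    linear_combination ht
  obtain ⟨u, hu⟩ := IsAlgClosed.exists_pow_nat_eq (k := ℂ) (1 / (6 * t)) (n := 2) (by norm_num)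
  obtain ⟨v, hv⟩ := IsAlgClosed.exists_pow_nat_eq (k := ℂ) (1 / 6 : ℂ) (n := 2) (by norm_num)
  set a : Fin n → ℂ := fun i => if i = 0 then t else 1 with ha
  set b : Fin n → ℂ := fun i => if i = 0 then u else v with hb
  have hab : ∀ i : Fin n, 6 * a i * b i ^ 2 = 1 := by
    intro i
    by_cases h : i = 0
    · have h1 : a i = t := by simp [ha, h]
      have h2 : b i = u := by simp [hb, h]
      rw [h1, h2, hu]
      field_simp
    · have h1 : a i = 1 := by simp [ha, h]
      have h2 : b i = v := by simp [hb, h]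
      rw [h1, h2, hv]
      norm_num
  set M : Fin 2 × Fin n → MvPolynomial (Fin (n + 1)) ℂ := fun p =>
    C (a p.2) * X 0 + C ((if p.1 = 0 then 1 else -1) * b p.2) * X p.2.succ with hM
  refine ⟨fun k => M (finProdFinEquiv.symm k), ?_, ?_⟩
  · intro k
    exact isLinearForm_two 0 _ (by simp [Fin.succ_ne_zero, Ne, eq_comm]) _ _
  · have hre : ∑ k : Fin (2 * n), (M (finProdFinEquiv.symm k)) ^ 3
        = ∑ p : Fin 2 × Fin n, M p ^ 3 :=
      Fintype.sum_equiv finProdFinEquiv.symm _ _ (fun k => rfl)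
    have pair : ∀ i : Fin n, M (0, i) ^ 3 + M (1, i) ^ 3
        = C (2 * a i ^ 3) * X 0 ^ 3 + C (6 * a i * b i ^ 2) * (X 0 * X i.succ ^ 2) := by
      intro i
      simp only [hM, if_pos rfl, one_mul]
      have h1 : (if (1 : Fin 2) = 0 then (1:ℂ) else -1) = -1 := rfl
      rw [h1]
      push_cast [map_mul, map_ofNat, map_pow, map_neg, map_one]
      ring
    have hsum3 : ∑ i : Fin n, a i ^ 3 = 0 := by
      rw [Fin.sum_univ_succ]
      simp [ha, Fin.succ_ne_zero, ht]
    have step2 : ∑ p : Fin 2 × Fin n, M p ^ 3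
        = ∑ i : Fin n, (C (2 * a i ^ 3) * X 0 ^ 3 + X 0 * X i.succ ^ 2) := by
      rw [Fintype.sum_prod_type, Fin.sum_univ_two, ← Finset.sum_add_distrib]
      refine Finset.sum_congr rfl fun i _ => ?_
      rw [pair i, hab i, map_one, one_mul]
    have hfinal : ∑ i : Fin n, (C (2 * a i ^ 3) * X 0 ^ 3 + X 0 * X i.succ ^ 2)
        = ∑ i : Fin n, X 0 * X i.succ ^ 2 := by
      rw [Finset.sum_add_distrib, ← Finset.sum_mul, ← map_sum (C : ℂ →+* _),
        ← Finset.mul_sum, hsum3, mul_zero, map_zero, zero_mul, zero_add]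
    rw [hre, step2, hfinal, Fin.sum_univ_succ]
    simp [Fin.succ_ne_zero, Finset.mul_sum]
end

section
/- The complex Waring rank of the cubic form C = x₀(x₀x₁ + x₂² + x₃² + … + xₙ²) ∈ ℂ[x₀,…,xₙ] is at most 2n+1, i.e., C can be written as a sum of 2n+1 cubes of complex linear forms. -/
/-!
If `6α³ = 1` then `(α(a + b))³ + (α(a - b))³ = a³/3 + ab²`, so each term `x₀xᵢ²` (`2 ≤ i ≤ n`)
costs two cubes and leaves an extra `x₀³/3`. What remains, `x₀²x₁ - (n - 1)x₀³/3 = x₀²y` with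
`y = x₁ - (n - 1)x₀/3`, is a sum of three cubes by the same identity:
`x₀²y = (α(y + x₀))³ + (α(y - x₀))³ + (βy)³` where `3β³ = -1`. In total `2(n - 1) + 3 = 2n + 1`.
-/

open MvPolynomial Finset

section CubeIdentities

variable {R : Type*} [CommRing R]

theorem cube_add_add_cube_sub {α : R} (hα : 6 * α ^ 3 = 1) (a b : R) :
    (α * (a + b)) ^ 3 + (α * (a - b)) ^ 3 = 2 * α ^ 3 * a ^ 3 + a * b ^ 2 := by
  linear_combination (a * b ^ 2) * hα

theorem sq_mul_eq_sum_three_cubes {α β : R} (hα : 6 * α ^ 3 = 1) (hβ : 3 * β ^ 3 = -1) (a y : R) :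
    a ^ 2 * y = (α * (y + a)) ^ 3 + (α * (y - a)) ^ 3 + (β * y) ^ 3 := by
  linear_combination (β ^ 3 * y ^ 3 - a ^ 2 * y) * hα - 2 * α ^ 3 * y ^ 3 * hβ

theorem mul_add_sum_sq_eq {ι : Type*} (c x y : R) (S : Finset ι) (z : ι → R) :
    x * (x * y + ∑ i ∈ S, z i ^ 2) = x ^ 2 * (y - c * #S * x) + ∑ i ∈ S, (c * x ^ 3 + x * z i ^ 2) := by
  rw [sum_add_distrib, sum_const, ← mul_sum, nsmul_eq_mul]
  ring

end CubeIdentities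

section LinearForms

variable {n : ℕ}

theorem isLinearForm_X (j : Fin (n + 1)) : IsLinearForm (X j : MvPolynomial (Fin (n + 1)) ℂ) :=
  ⟨Pi.single j 1, by simp [Pi.single_apply, apply_ite C, ite_mul]⟩

theorem IsLinearForm.add {L M : MvPolynomial (Fin (n + 1)) ℂ} (hL : IsLinearForm L)
    (hM : IsLinearForm M) : IsLinearForm (L + M) := by
  obtain ⟨a, rfl⟩ := hL
  obtain ⟨b, rfl⟩ := hM
  exact ⟨a + b, by simp only [Pi.add_apply, map_add, add_mul, sum_add_distrib]⟩

theorem IsLinearForm.C_mul {L : MvPolynomial (Fin (n + 1)) ℂ} (hL : IsLinearForm L) (c : ℂ) :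
    IsLinearForm (C c * L) := by
  obtain ⟨a, rfl⟩ := hL
  exact ⟨c • a, by simp only [mul_sum, Pi.smul_apply, smul_eq_mul, map_mul, mul_assoc]⟩

theorem IsLinearForm.sub {L M : MvPolynomial (Fin (n + 1)) ℂ} (hL : IsLinearForm L)
    (hM : IsLinearForm M) : IsLinearForm (L - M) := by
  simpa [sub_eq_add_neg] using hL.add (hM.C_mul (-1))

end LinearForms

def IsSumOfCubes {n : ℕ} (s : ℕ) (F : MvPolynomial (Fin (n + 1)) ℂ) : Prop :=
  ∃ L : Fin s → MvPolynomial (Fin (n + 1)) ℂ, (∀ k, IsLinearForm (L k)) ∧ F = ∑ k, L k ^ 3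

namespace IsSumOfCubes

variable {n : ℕ} {s t : ℕ} {F G : MvPolynomial (Fin (n + 1)) ℂ}

theorem zero : IsSumOfCubes 0 (0 : MvPolynomial (Fin (n + 1)) ℂ) :=
  ⟨Fin.elim0, fun k => k.elim0, by simp⟩

theorem cube {L : MvPolynomial (Fin (n + 1)) ℂ} (hL : IsLinearForm L) : IsSumOfCubes 1 (L ^ 3) :=
  ⟨fun _ => L, fun _ => hL, by simp⟩

theorem add (hF : IsSumOfCubes s F) (hG : IsSumOfCubes t G) : IsSumOfCubes (s + t) (F + G) := by
  obtain ⟨L, hL, rfl⟩ := hF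
  obtain ⟨M, hM, rfl⟩ := hG
  exact ⟨Fin.append L M, Fin.addCases (by simpa using hL) (by simpa using hM),
    by simp [Fin.sum_univ_add]⟩

theorem finset_sum {ι : Type*} {S : Finset ι} {f : ι → MvPolynomial (Fin (n + 1)) ℂ}
    (h : ∀ i ∈ S, IsSumOfCubes t (f i)) : IsSumOfCubes (#S * t) (∑ i ∈ S, f i) := by
  classical
  induction S using Finset.induction_on with
  | empty => simpa using zero
  | insert i S hi ih =>
    rw [sum_insert hi, card_insert_of_notMem hi, Nat.succ_mul, add_comm (#S * t)]
    exact (h i (mem_insert_self i S)).add (ih fun j hj => h j (mem_insert_of_mem hj))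

theorem C_mul_cube_add_mul_sq {a b : MvPolynomial (Fin (n + 1)) ℂ} (ha : IsLinearForm a)
    (hb : IsLinearForm b) : IsSumOfCubes 2 (C (1 / 3) * a ^ 3 + a * b ^ 2) := by
  obtain ⟨α, hα⟩ := IsAlgClosed.exists_pow_nat_eq (1 / 6 : ℂ) three_pos
  have hCα : 6 * C α ^ 3 = (1 : MvPolynomial (Fin (n + 1)) ℂ) := by
    rw [← map_pow, ← map_ofNat C 6, ← map_mul, hα]; norm_num
  have h13 : C (1 / 3) = (2 * C α ^ 3 : MvPolynomial (Fin (n + 1)) ℂ) := by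
    rw [← map_pow, ← map_ofNat C 2, ← map_mul, hα]; norm_num
  rw [h13, ← cube_add_add_cube_sub hCα]
  exact (cube ((ha.add hb).C_mul α)).add (cube ((ha.sub hb).C_mul α))

theorem sq_mul {a y : MvPolynomial (Fin (n + 1)) ℂ} (ha : IsLinearForm a)
    (hy : IsLinearForm y) : IsSumOfCubes 3 (a ^ 2 * y) := by
  obtain ⟨α, hα⟩ := IsAlgClosed.exists_pow_nat_eq (1 / 6 : ℂ) three_pos
  obtain ⟨β, hβ⟩ := IsAlgClosed.exists_pow_nat_eq (-1 / 3 : ℂ) three_pos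
  have hCα : 6 * C α ^ 3 = (1 : MvPolynomial (Fin (n + 1)) ℂ) := by
    rw [← map_pow, ← map_ofNat C 6, ← map_mul, hα]; norm_num
  have hCβ : 3 * C β ^ 3 = (-1 : MvPolynomial (Fin (n + 1)) ℂ) := by
    rw [← map_pow, ← map_ofNat C 3, ← map_mul, hβ]; norm_num
  rw [sq_mul_eq_sum_three_cubes hCα hCβ]
  exact ((cube ((hy.add ha).C_mul α)).add (cube ((hy.sub ha).C_mul α))).add (cube (hy.C_mul β))

end IsSumOfCubes

theorem Fin.card_filter_two_le_val {n : ℕ} : #{i : Fin (n + 1) | 2 ≤ (i : ℕ)} = n - 1 := by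
  have hlt := Fin.card_filter_val_lt (n := n + 1) (m := 2)
  have hsplit := card_filter_add_card_filter_not (s := univ) (fun i : Fin (n + 1) => (i : ℕ) < 2)
  simp only [not_lt, card_univ, Fintype.card_fin] at hsplit
  omega

theorem stmt_7 (n : ℕ) (hn : 2 ≤ n) :
    ∃ L : Fin (2 * n + 1) → MvPolynomial (Fin (n + 1)) ℂ, (∀ k, IsLinearForm (L k)) ∧
      X 0 * (X 0 * X 1 + ∑ i : Fin (n + 1), if 2 ≤ (i : ℕ) then X i ^ 2 else 0) =
        ∑ k, L k ^ 3 := by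
  have hrank : 2 * n + 1 = 3 + #{i : Fin (n + 1) | 2 ≤ (i : ℕ)} * 2 := by
    rw [Fin.card_filter_two_le_val]; omega
  change IsSumOfCubes (2 * n + 1) _
  rw [← sum_filter, mul_add_sum_sq_eq (C (1 / 3)), ← map_natCast C, ← map_mul, hrank]
  exact (IsSumOfCubes.sq_mul (isLinearForm_X 0)
      ((isLinearForm_X 1).sub ((isLinearForm_X 0).C_mul _))).add
    (IsSumOfCubes.finset_sum fun i _ =>
      IsSumOfCubes.C_mul_cube_add_mul_sq (isLinearForm_X 0) (isLinearForm_X i))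
end

section
/- The complex Waring rank of the cubic form C = x₀(x₀x₁ + x₂² + … + xₙ²) ∈ ℂ[x₀,…,xₙ] is exactly 2n+1. -/
open MvPolynomial

set_option synthInstance.maxHeartbeats 1000000
set_option maxHeartbeats 1600000

noncomputable abbrev PP (m : ℕ) := MvPolynomial (Fin (m+2+1)) ℂ

lemma isLinearForm_two_s10 {n : ℕ} (α β : ℂ) (v : Fin (n+1)) (hv : v ≠ 0) :
    IsLinearForm (C α * X 0 + C β * X v) := by
  refine ⟨fun j => (if j = 0 then α else 0) + (if j = v then β else 0), ?_⟩
  have h : ∀ j : Fin (n+1),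
      C ((if j = 0 then α else 0) + (if j = v then β else 0)) * X j
      = (if j = 0 then C α * X 0 else 0) + (if j = v then C β * X v else 0) := by
    intro j
    by_cases h0 : j = 0
    · subst h0
      rw [if_pos rfl, if_pos rfl, if_neg (Ne.symm hv), if_neg (Ne.symm hv)]
      simp
    · rw [if_neg h0, if_neg h0]
      by_cases h1 : j = v
      · subst h1; simp
      · rw [if_neg h1, if_neg h1]; simp
  rw [Finset.sum_congr rfl (fun j _ => h j), Finset.sum_add_distrib]
  simp

lemma key_pair {m : ℕ} (r : ℂ) (hr : r ^ 3 = (6:ℂ)⁻¹) (i : Fin (m+1)) :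
    (C r * X 0 + C r * X i.succ.succ : PP m) ^ 3
      + (C r * X 0 + C (-r) * X i.succ.succ) ^ 3
      = C (6:ℂ)⁻¹ * (2 * X 0 ^ 3 + 6 * X 0 * X i.succ.succ ^ 2) := by
  have h3 : (C r : PP m) ^ 3 = C (6:ℂ)⁻¹ := by rw [← map_pow, hr]
  rw [map_neg, ← h3]
  ring

lemma key_special {m : ℕ} (r t u γ : ℂ) (hr : r ^ 3 = (6:ℂ)⁻¹)
    (ht : t ^ 3 = -(6:ℂ)⁻¹) (hu : u ^ 3 = -(3:ℂ)⁻¹) :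
    (C (r*(1-γ)) * X 0 + C r * X 1 : PP m) ^ 3
      + (C (t*(1+γ)) * X 0 + C (-t) * X 1) ^ 3
      + (C (-(u*γ)) * X 0 + C u * X 1) ^ 3
      = X 0 ^ 2 * X 1 - C γ * X 0 ^ 3 := by
  have e1 : (C (r*(1-γ)) * X 0 + C r * X 1 : PP m)
      = C r * (X 0 + (X 1 - C γ * X 0)) := by
    rw [map_mul, map_sub, map_one]; ring
  have e2 : (C (t*(1+γ)) * X 0 + C (-t) * X 1 : PP m)
      = C t * (X 0 - (X 1 - C γ * X 0)) := by
    rw [map_mul, map_add, map_one, map_neg]; ring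
  have e3 : (C (-(u*γ)) * X 0 + C u * X 1 : PP m)
      = C u * (X 1 - C γ * X 0) := by
    rw [map_neg, map_mul]; ring
  rw [e1, e2, e3, mul_pow, mul_pow, mul_pow, ← map_pow, ← map_pow, ← map_pow, hr, ht, hu]
  rw [map_neg, map_neg]
  have c23 : (C (3:ℂ)⁻¹ : PP m) = C (6:ℂ)⁻¹ * 2 := by
    rw [show ((3:ℂ)⁻¹ = (6:ℂ)⁻¹ * 2) by norm_num, map_mul, map_ofNat]
  rw [c23]
  have h6 : (C (6:ℂ)⁻¹ : PP m) * 6 = 1 := by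
    rw [show ((6 : PP m) = C (6:ℂ)) by rw [map_ofNat], ← map_mul]
    norm_num
  have expand : (C (6:ℂ)⁻¹ : PP m) * (X 0 + (X 1 - C γ * X 0)) ^ 3
      + -(C (6:ℂ)⁻¹) * (X 0 - (X 1 - C γ * X 0)) ^ 3
      + -(C (6:ℂ)⁻¹ * 2) * (X 1 - C γ * X 0) ^ 3
      = (C (6:ℂ)⁻¹ * 6) * (X 0 ^ 2 * X 1 - C γ * X 0 ^ 3) := by ring
  rw [expand, h6, one_mul]

lemma ite_sum (m : ℕ) :
    (∑ i : Fin (m+2+1), if 2 ≤ (i : ℕ) then (X i : PP m) ^ 2 else 0)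
      = ∑ i : Fin (m+1), X i.succ.succ ^ 2 := by
  rw [Fin.sum_univ_succ, Fin.sum_univ_succ]
  simp

noncomputable def eqv (m : ℕ) : (Fin 3 ⊕ Fin (m+1) × Fin 2) ≃ Fin (2*(m+2)+1) :=
  ((Equiv.sumCongr (Equiv.refl (Fin 3)) finProdFinEquiv).trans finSumFinEquiv).trans
    (finCongr (by omega))

theorem upper (m : ℕ) (F : PP m)
    (hF : F = X 0 * (X 0 * X 1 + ∑ i : Fin (m+2+1), if 2 ≤ (i : ℕ) then X i ^ 2 else 0)) :
    ∃ L : Fin (2 * (m+2) + 1) → PP m,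
      (∀ k, IsLinearForm (L k)) ∧ F = ∑ k, L k ^ 3 := by
  obtain ⟨r, hr⟩ : ∃ r : ℂ, r ^ 3 = (6:ℂ)⁻¹ := IsAlgClosed.exists_pow_nat_eq _ (by norm_num)
  obtain ⟨t, ht⟩ : ∃ t : ℂ, t ^ 3 = -(6:ℂ)⁻¹ := IsAlgClosed.exists_pow_nat_eq _ (by norm_num)
  obtain ⟨u, hu⟩ : ∃ u : ℂ, u ^ 3 = -(3:ℂ)⁻¹ := IsAlgClosed.exists_pow_nat_eq _ (by norm_num)
  set γ : ℂ := ((m:ℂ)+1)/3 with hγdef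
  set L₀ : Fin 3 ⊕ Fin (m+1) × Fin 2 → PP m := fun z =>
    match z with
    | .inl j => if j = 0 then C (r*(1-γ)) * X 0 + C r * X 1
        else if j = 1 then C (t*(1+γ)) * X 0 + C (-t) * X 1
        else C (-(u*γ)) * X 0 + C u * X 1
    | .inr (i, s) => C r * X 0 + C (if s = 0 then r else -r) * X i.succ.succ
    with hL₀
  have hone : (1 : Fin (m+2+1)) ≠ 0 := by
    intro h
    have := congrArg Fin.val h
    simp at this
  have hall : ∀ z, IsLinearForm (L₀ z) := by
    rintro (j | ⟨i, s⟩)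
    · fin_cases j
      · exact isLinearForm_two_s10 _ _ 1 hone
      · exact isLinearForm_two_s10 _ _ 1 hone
      · exact isLinearForm_two_s10 _ _ 1 hone
    · rcases Fin.exists_fin_two.mp ⟨s, rfl⟩ with h | h <;> subst h <;>
        exact isLinearForm_two_s10 _ _ i.succ.succ (Fin.succ_ne_zero _)
  refine ⟨fun k => L₀ ((eqv m).symm k), fun k => hall _, ?_⟩
  · rw [Equiv.sum_comp (eqv m).symm (fun z => L₀ z ^ 3), Fintype.sum_sum_type,
      Fin.sum_univ_three, Fintype.sum_prod_type]
    have hinl0 : L₀ (Sum.inl 0) = C (r*(1-γ)) * X 0 + C r * X 1 := by simp [hL₀]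
    have hinl1 : L₀ (Sum.inl 1) = C (t*(1+γ)) * X 0 + C (-t) * X 1 := by
      simp [hL₀]
    have hinl2 : L₀ (Sum.inl 2) = C (-(u*γ)) * X 0 + C u * X 1 := by
      simp [hL₀]
    have hinr : ∀ i : Fin (m+1), (∑ s : Fin 2, L₀ (Sum.inr (i, s)) ^ 3)
        = C (6:ℂ)⁻¹ * (2 * X 0 ^ 3 + 6 * X 0 * X i.succ.succ ^ 2) := by
      intro i
      rw [Fin.sum_univ_two]
      have h0 : L₀ (Sum.inr (i, 0)) = C r * X 0 + C r * X i.succ.succ := by simp [hL₀]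
      have h1 : L₀ (Sum.inr (i, 1)) = C r * X 0 + C (-r) * X i.succ.succ := by
        simp [hL₀]
      rw [h0, h1, key_pair r hr i]
    rw [hinl0, hinl1, hinl2]
    rw [Finset.sum_congr rfl (fun i _ => hinr i), ← Finset.mul_sum]
    have hsum2 : (∑ i : Fin (m+1), (2 * X 0 ^ 3 + 6 * X 0 * X i.succ.succ ^ 2) : PP m)
        = C ((m:ℂ)+1) * (2 * X 0 ^ 3) + 6 * X 0 * ∑ i : Fin (m+1), X i.succ.succ ^ 2 := by
      rw [Finset.sum_add_distrib, Finset.sum_const, Finset.card_univ, Fintype.card_fin]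
      rw [nsmul_eq_mul]
      have : ((m+1 : ℕ) : PP m) = C ((m:ℂ)+1) := by
        rw [show ((m:ℂ)+1) = (((m+1:ℕ)) : ℂ) by push_cast; ring]
        exact (map_natCast (C : ℂ →+* PP m) (m+1)).symm
      rw [this, Finset.mul_sum]
    rw [hsum2]
    have hkey3 := key_special (m := m) r t u γ hr ht hu
    rw [hF, ite_sum]
    rw [hkey3]
    have h6 : (C (6:ℂ)⁻¹ : PP m) * 6 = 1 := by
      rw [show ((6 : PP m) = C (6:ℂ)) by rw [map_ofNat], ← map_mul]
      norm_num
    have hγC : (C (6:ℂ)⁻¹ : PP m) * (C ((m:ℂ)+1) * 2) = C γ := by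
      rw [show ((2 : PP m) = C (2:ℂ)) by rw [map_ofNat], ← map_mul, ← map_mul]
      congr 1
      rw [hγdef]
      field_simp
      ring
    set Q' : PP m := ∑ i : Fin (m+1), X i.succ.succ ^ 2
    calc X 0 * (X 0 * X 1 + Q')
        = (X 0 ^ 2 * X 1 - C γ * X 0 ^ 3)
          + ((C (6:ℂ)⁻¹ * (C ((m:ℂ)+1) * 2)) * X 0 ^ 3 + (C (6:ℂ)⁻¹ * 6) * (X 0 * Q')) := by
          rw [hγC, h6]; ring
      _ = X 0 ^ 2 * X 1 - C γ * X 0 ^ 3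
          + C (6:ℂ)⁻¹ * (C ((m:ℂ)+1) * (2 * X 0 ^ 3) + 6 * X 0 * Q') := by ring


section LowerBound
open Finset
noncomputable section
namespace StmtLower

/-- truncated coordinate pairing over indices `≥ 2` -/
def qb {N : ℕ} (y z : Fin N → ℂ) : ℂ := ∑ i : Fin N, if 2 ≤ (i : ℕ) then y i * z i else 0

lemma qb_add_left {N : ℕ} (x y z : Fin N → ℂ) : qb (x + y) z = qb x z + qb y z := by
  unfold qb
  rw [← Finset.sum_add_distrib]
  refine Finset.sum_congr rfl fun i _ => ?_
  split_ifs <;> simp <;> ring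

lemma qb_add_right {N : ℕ} (x y z : Fin N → ℂ) : qb x (y + z) = qb x y + qb x z := by
  unfold qb
  rw [← Finset.sum_add_distrib]
  refine Finset.sum_congr rfl fun i _ => ?_
  split_ifs <;> simp <;> ring

lemma qb_single_left {N : ℕ} (i : Fin N) (z : Fin N → ℂ) :
    qb (Pi.single i 1) z = if 2 ≤ (i : ℕ) then z i else 0 := by
  unfold qb
  rw [Finset.sum_eq_single i]
  · simp
  · intro j _ hj
    rw [Pi.single_eq_of_ne hj]
    split_ifs <;> simp
  · intro h; exact absurd (Finset.mem_univ i) h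

lemma qb_comm {N : ℕ} (y z : Fin N → ℂ) : qb y z = qb z y := by
  unfold qb
  exact Finset.sum_congr rfl fun i _ => by split_ifs <;> simp [mul_comm]

/-- the polarized target form -/
def Bf {N : ℕ} (x y z : Fin (N + 2) → ℂ) : ℂ :=
  (x 0 * y 0 * z 1 + x 0 * y 1 * z 0 + x 1 * y 0 * z 0
    + x 0 * qb y z + y 0 * qb x z + z 0 * qb x y) / 3

section
variable {s N : ℕ} (a : Fin s → Fin (N + 2) → ℂ)

def ellf (k : Fin s) (y : Fin (N + 2) → ℂ) : ℂ := ∑ i, a k i * y i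

lemma ellf_add (k : Fin s) (y z : Fin (N + 2) → ℂ) :
    ellf a k (y + z) = ellf a k y + ellf a k z := by
  unfold ellf
  rw [← Finset.sum_add_distrib]
  exact Finset.sum_congr rfl fun i _ => by simp [mul_add]

lemma ellf_smul (k : Fin s) (c : ℂ) (y : Fin (N + 2) → ℂ) :
    ellf a k (c • y) = c * ellf a k y := by
  unfold ellf
  rw [Finset.mul_sum]
  exact Finset.sum_congr rfl fun i _ => by simp; ring

lemma ellf_single (k : Fin s) (i : Fin (N + 2)) : ellf a k (Pi.single i 1) = a k i := by
  unfold ellf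
  rw [Finset.sum_eq_single i]
  · simp
  · intro j _ hj; rw [Pi.single_eq_of_ne hj]; simp
  · intro h; exact absurd (Finset.mem_univ i) h

lemma tri
    (hid : ∀ y : Fin (N + 2) → ℂ, (∑ k, (ellf a k y) ^ 3)
      = (y 0) ^ 2 * y 1 + y 0 * qb y y) :
    ∀ x y z : Fin (N + 2) → ℂ,
      (∑ k, ellf a k x * ellf a k y * ellf a k z) = Bf x y z := by
  intro x y z
  have h6 : (6 : ℂ) ≠ 0 := by norm_num
  apply mul_left_cancel₀ h6
  have step1 : (6 : ℂ) * (∑ k, ellf a k x * ellf a k y * ellf a k z)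
      = (∑ k, (ellf a k (x + y + z)) ^ 3)
        - (∑ k, (ellf a k (x + y)) ^ 3) - (∑ k, (ellf a k (x + z)) ^ 3)
        - (∑ k, (ellf a k (y + z)) ^ 3)
        + (∑ k, (ellf a k x) ^ 3) + (∑ k, (ellf a k y) ^ 3) + (∑ k, (ellf a k z) ^ 3) := by
    rw [Finset.mul_sum, ← Finset.sum_sub_distrib, ← Finset.sum_sub_distrib,
      ← Finset.sum_sub_distrib, ← Finset.sum_add_distrib, ← Finset.sum_add_distrib,
      ← Finset.sum_add_distrib]
    refine Finset.sum_congr rfl fun k _ => ?_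
    rw [ellf_add a k (x + y) z, ellf_add a k x y, ellf_add a k x z, ellf_add a k y z]
    ring
  rw [step1, hid, hid, hid, hid, hid, hid, hid]
  simp only [Pi.add_apply, qb_add_left, qb_add_right]
  rw [qb_comm y x, qb_comm z x, qb_comm z y]
  unfold Bf
  ring

end

lemma h01 {N : ℕ} : (0 : Fin (N+2)) ≠ 1 := by simp [Fin.ext_iff]

lemma Bf_single_one {N : ℕ} (y z : Fin (N+2) → ℂ) :
    Bf (Pi.single 1 1) y z = (y 0 * z 0) / 3 := by
  unfold Bf
  rw [qb_single_left, qb_comm, qb_single_left, Pi.single_eq_same,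
    Pi.single_eq_of_ne h01]
  simp

lemma Bf_single_zero {N : ℕ} (y z : Fin (N+2) → ℂ) :
    Bf (Pi.single 0 1) y z = (y 0 * z 1 + y 1 * z 0 + qb y z) / 3 := by
  unfold Bf
  rw [qb_single_left, qb_comm, qb_single_left, Pi.single_eq_same,
    Pi.single_eq_of_ne (Ne.symm h01)]
  simp

lemma Bf_single_big {N : ℕ} (i : Fin (N+2)) (h2 : 2 ≤ (i : ℕ)) (y z : Fin (N+2) → ℂ) :
    Bf (Pi.single i 1) y z = (y 0 * z i + z 0 * y i) / 3 := by
  have hi0 : i ≠ 0 := by intro h; subst h; simp at h2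
  have hi1 : i ≠ 1 := by
    intro h; subst h; rw [Fin.val_one] at h2; omega
  unfold Bf
  rw [qb_single_left, qb_comm, qb_single_left, Pi.single_eq_of_ne (Ne.symm hi0),
    Pi.single_eq_of_ne (Ne.symm hi1), if_pos h2, if_pos h2]
  ring

lemma zero_of_B {N : ℕ} (y z : Fin (N+2) → ℂ) (hy0 : y 0 ≠ 0)
    (hB : ∀ i, Bf (Pi.single i 1) y z = 0) : z = 0 := by
  have h3 : (3 : ℂ) ≠ 0 := by norm_num
  have hz0 : z 0 = 0 := by
    have h := hB 1
    rw [Bf_single_one, div_eq_zero_iff] at h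
    rcases h with h | h
    · rcases mul_eq_zero.mp h with h | h
      · exact absurd h hy0
      · exact h
    · exact absurd h h3
  have hz2 : ∀ i : Fin (N+2), 2 ≤ (i : ℕ) → z i = 0 := by
    intro i h2
    have h := hB i
    rw [Bf_single_big i h2, hz0, div_eq_zero_iff] at h
    rcases h with h | h
    · rcases mul_eq_zero.mp (by linear_combination h : y 0 * z i = 0) with h' | h'
      · exact absurd h' hy0
      · exact h'
    · exact absurd h h3
  have hqb : qb y z = 0 := by
    apply Finset.sum_eq_zero
    intro i _
    split_ifs with h
    · rw [hz2 i h]; ring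
    · rfl
  have hz1 : z 1 = 0 := by
    have h := hB 0
    rw [Bf_single_zero, hqb, hz0, div_eq_zero_iff] at h
    rcases h with h | h
    · rcases mul_eq_zero.mp (by linear_combination h : y 0 * z 1 = 0) with h' | h'
      · exact absurd h' hy0
      · exact h'
    · exact absurd h h3
  funext i
  have : (i : ℕ) = 0 ∨ (i : ℕ) = 1 ∨ 2 ≤ (i : ℕ) := by omega
  rcases this with h | h | h
  · have : i = 0 := by rwa [Fin.ext_iff, Fin.val_zero]
    rw [this]; exact hz0
  · have : i = 1 := by rw [Fin.ext_iff, Fin.val_one]; exact h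
    rw [this]; exact hz1
  · exact hz2 i h

section
open scoped Classical
variable {s N : ℕ} (a : Fin s → Fin (N + 2) → ℂ)

/-- K1: any "witness direction" with nonzero first coordinate has support of size ≥ N+2. -/
lemma count_ge
    (hid : ∀ y : Fin (N + 2) → ℂ, (∑ k, (ellf a k y) ^ 3) = (y 0) ^ 2 * y 1 + y 0 * qb y y)
    (y : Fin (N + 2) → ℂ) (hy0 : y 0 ≠ 0) :
    N + 2 ≤ (Finset.univ.filter fun k => ellf a k y ≠ 0).card := by
  set T := (Finset.univ.filter fun k => ellf a k y ≠ 0) with hT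
  let φ : (Fin (N + 2) → ℂ) →ₗ[ℂ] (↥T → ℂ) :=
    { toFun := fun z (k : ↥T) => ellf a (↑k) z
      map_add' := by
        intro z w; funext k; exact ellf_add a _ z w
      map_smul' := by
        intro c z; funext k; exact ellf_smul a _ c z }
  have hinj : Function.Injective φ := by
    rw [injective_iff_map_eq_zero]
    intro z hz
    have hz' : ∀ k : Fin s, ellf a k y ≠ 0 → ellf a k z = 0 := by
      intro k hk
      have hkT : k ∈ T := by rw [hT]; simp [hk]
      exact congrFun hz ⟨k, hkT⟩
    have hB : ∀ i, Bf (Pi.single i 1) y z = 0 := by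
      intro i
      rw [← tri a hid (Pi.single i 1) y z]
      apply Finset.sum_eq_zero
      intro k _
      by_cases h : ellf a k y = 0
      · rw [h]; ring
      · rw [hz' k h]; ring
    exact zero_of_B y z hy0 hB
  calc N + 2 = Module.finrank ℂ (Fin (N + 2) → ℂ) := by
        rw [Module.finrank_fintype_fun_eq_card, Fintype.card_fin]
    _ ≤ Module.finrank ℂ (↥T → ℂ) := LinearMap.finrank_le_finrank_of_injective hinj
    _ = T.card := by
        rw [Module.finrank_fintype_fun_eq_card, Fintype.card_coe]

/-- Injectivity on the hyperplane `y 0 = 0`. -/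
lemma y_eq_zero
    (hid : ∀ y : Fin (N + 2) → ℂ, (∑ k, (ellf a k y) ^ 3) = (y 0) ^ 2 * y 1 + y 0 * qb y y)
    (y : Fin (N + 2) → ℂ) (h0 : y 0 = 0) (hall : ∀ k, ellf a k y = 0) :
    y = 0 := by
  have hB : ∀ i : Fin (N + 2), Bf (Pi.single i 1) (Pi.single 0 1) y = 0 := by
    intro i
    rw [← tri a hid (Pi.single i 1) (Pi.single 0 1) y]
    apply Finset.sum_eq_zero
    intro k _
    rw [hall k]; ring
  have h3 : (3:ℂ) ≠ 0 := by norm_num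
  have h1 : y 1 = 0 := by
    have h := hB 0
    rw [Bf_single_zero, qb_single_left] at h
    rw [Pi.single_eq_same, Pi.single_eq_of_ne (Ne.symm (h01 (N := N))), Fin.val_zero] at h
    norm_num at h
    exact h
  have h2 : ∀ i : Fin (N + 2), 2 ≤ (i : ℕ) → y i = 0 := by
    intro i hi
    have h := hB i
    rw [Bf_single_big i hi] at h
    have hne : i ≠ 0 := by
      intro hcontr
      rw [hcontr] at hi; simp at hi
    rw [Pi.single_eq_same, Pi.single_eq_of_ne hne] at h
    norm_num at h
    exact h
  funext i
  have : (i : ℕ) = 0 ∨ (i : ℕ) = 1 ∨ 2 ≤ (i : ℕ) := by omega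
  rcases this with h | h | h
  · have : i = 0 := by rwa [Fin.ext_iff, Fin.val_zero]
    rw [this]; exact h0
  · have : i = 1 := by rw [Fin.ext_iff, Fin.val_one]; exact h
    rw [this]; exact h1
  · exact h2 i h

end

lemma ham {ι : Type*} [Fintype ι] [DecidableEq ι] (d : ℕ) :
    ∀ (σ : Submodule ℂ (ι → ℂ)), d ≤ Module.finrank ℂ σ → ∀ g : ι → ℂ,
    ∃ h ∈ σ, ∃ S : Finset ι, S.card = d ∧ (∀ k ∈ S, g k = h k) ∧
      (∀ k ∈ S, ∃ v ∈ σ, v k ≠ 0) := by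
  induction d with
  | zero =>
    intro σ _ g
    exact ⟨0, σ.zero_mem, ∅, by simp, by simp, by simp⟩
  | succ d IH =>
    intro σ hσ g
    have hne : σ ≠ ⊥ := by
      intro hbot
      rw [hbot, finrank_bot] at hσ; omega
    obtain ⟨h₀, h₀σ, h₀ne⟩ := Submodule.ne_bot_iff σ |>.mp hne
    obtain ⟨k₀, hk₀⟩ : ∃ k, h₀ k ≠ 0 := by
      by_contra hcon
      push_neg at hcon
      exact h₀ne (funext hcon)
    set f : ↥σ →ₗ[ℂ] ℂ := (LinearMap.proj k₀).comp σ.subtype with hf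
    have hrank : d ≤ Module.finrank ℂ (LinearMap.ker f) := by
      have h1 := LinearMap.finrank_range_add_finrank_ker f
      have h2 : Module.finrank ℂ (LinearMap.range f) ≤ 1 := by
        calc Module.finrank ℂ (LinearMap.range f) ≤ Module.finrank ℂ ℂ :=
          (LinearMap.range f).finrank_le
        _ = 1 := Module.finrank_self ℂ
      omega
    set τ : Submodule ℂ (ι → ℂ) := (LinearMap.ker f).map σ.subtype with hτ
    have hτrank : d ≤ Module.finrank ℂ τ := by
      have e := Submodule.equivMapOfInjective σ.subtype σ.injective_subtype (LinearMap.ker f)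
      have he : Module.finrank ℂ (LinearMap.ker f) = Module.finrank ℂ τ := e.finrank_eq
      omega
    have hτ_le : τ ≤ σ := by
      rintro x ⟨y, _, rfl⟩
      exact y.2
    have hτ0 : ∀ v ∈ τ, v k₀ = 0 := by
      rintro v ⟨y, hy, rfl⟩
      exact LinearMap.mem_ker.mp hy
    set c := g k₀ / h₀ k₀ with hc
    obtain ⟨h, hhτ, S, hScard, hSmatch, hSwit⟩ := IH τ hτrank (g - c • h₀)
    have hk₀S : k₀ ∉ S := by
      intro hk
      obtain ⟨v, hvτ, hvne⟩ := hSwit k₀ hk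
      exact hvne (hτ0 v hvτ)
    refine ⟨h + c • h₀, σ.add_mem (hτ_le hhτ) (σ.smul_mem c h₀σ), insert k₀ S, ?_, ?_, ?_⟩
    · rw [Finset.card_insert_of_notMem hk₀S, hScard]
    · intro k hk
      rcases Finset.mem_insert.mp hk with rfl | hk
      · have hh0 : h k = 0 := hτ0 h hhτ
        rw [Pi.add_apply, hh0, zero_add, Pi.smul_apply, smul_eq_mul, hc,
          div_mul_cancel₀ _ hk₀]
      · have hm := hSmatch k hk
        rw [Pi.sub_apply, Pi.smul_apply, smul_eq_mul] at hm
        rw [Pi.add_apply, Pi.smul_apply, smul_eq_mul]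
        linear_combination hm
    · intro k hk
      rcases Finset.mem_insert.mp hk with rfl | hk
      · exact ⟨h₀, h₀σ, hk₀⟩
      · obtain ⟨v, hvτ, hvne⟩ := hSwit k hk
        exact ⟨v, hτ_le hvτ, hvne⟩

section
variable {s N : ℕ}

lemma ellf_sub (a : Fin s → Fin (N + 2) → ℂ) (k : Fin s) (y z : Fin (N + 2) → ℂ) :
    ellf a k (y - z) = ellf a k y - ellf a k z := by
  unfold ellf
  rw [← Finset.sum_sub_distrib]
  exact Finset.sum_congr rfl fun i _ => by simp [mul_sub]

lemma lowerAux (a : Fin s → Fin (N + 2) → ℂ)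
    (hid : ∀ y : Fin (N + 2) → ℂ, (∑ k, (ellf a k y) ^ 3) = (y 0) ^ 2 * y 1 + y 0 * qb y y) :
    2 * (N + 1) + 1 ≤ s := by
  classical
  let Λ : (Fin (N + 2) → ℂ) →ₗ[ℂ] (Fin s → ℂ) :=
    { toFun := fun y k => ellf a k y
      map_add' := fun y z => funext fun k => ellf_add a k y z
      map_smul' := fun c y => funext fun k => ellf_smul a k c y }
  let p0 : (Fin (N + 2) → ℂ) →ₗ[ℂ] ℂ := LinearMap.proj 0
  let Y₀ : Submodule ℂ (Fin (N + 2) → ℂ) := LinearMap.ker p0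
  have hY₀rank : Module.finrank ℂ Y₀ = N + 1 := by
    have hsurj : Function.Surjective p0 := fun c => ⟨Pi.single 0 c, by simp [p0]⟩
    have h1 := LinearMap.finrank_range_add_finrank_ker p0
    rw [LinearMap.range_eq_top.mpr hsurj] at h1
    rw [finrank_top, Module.finrank_self, Module.finrank_fintype_fun_eq_card,
      Fintype.card_fin] at h1
    have hYk : Module.finrank ℂ Y₀ = Module.finrank ℂ (LinearMap.ker p0) := rfl
    omega
  let ΛY : ↥Y₀ →ₗ[ℂ] (Fin s → ℂ) := Λ.comp Y₀.subtype
  have hker : ∀ v : ↥Y₀, ΛY v = 0 → v = 0 := by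
    intro v hv
    have h0 : (v : Fin (N + 2) → ℂ) 0 = 0 := v.2
    have hall : ∀ k, ellf a k (v : Fin (N + 2) → ℂ) = 0 := fun k => congrFun hv k
    exact Subtype.ext (y_eq_zero a hid _ h0 hall)
  let U : Submodule ℂ (Fin s → ℂ) := Y₀.map Λ
  have hUrank : N + 1 ≤ Module.finrank ℂ U := by
    have h1 := LinearMap.finrank_range_add_finrank_ker ΛY
    have h2 : LinearMap.ker ΛY = ⊥ := LinearMap.ker_eq_bot'.mpr hker
    have h3 : LinearMap.range ΛY = U := by
      rw [LinearMap.range_comp, Submodule.range_subtype]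
    rw [h2, h3, finrank_bot, hY₀rank] at h1
    omega
  obtain ⟨h, hhU, S, hScard, hSmatch, -⟩ := ham (N + 1) U hUrank (Λ (Pi.single 0 1))
  obtain ⟨y', hy'Y₀, rfl⟩ := Submodule.mem_map.mp hhU
  set y : Fin (N + 2) → ℂ := Pi.single 0 1 - y' with hy
  have hy'0 : y' 0 = 0 := hy'Y₀
  have hy0 : y 0 ≠ 0 := by
    rw [hy, Pi.sub_apply, Pi.single_eq_same, hy'0, sub_zero]
    norm_num
  have hcount := count_ge a hid y hy0
  have hdisjoint : Disjoint (Finset.univ.filter fun k => ellf a k y ≠ 0) S := by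
    rw [Finset.disjoint_right]
    intro k hkS
    have hm := hSmatch k hkS
    simp only [Finset.mem_filter, not_and, Finset.mem_univ, forall_true_left]
    intro hcontr
    apply hcontr
    have : ellf a k y = ellf a k (Pi.single 0 1) - ellf a k y' := ellf_sub a k _ _
    rw [this]
    have hg : ellf a k (Pi.single 0 1) = Λ (Pi.single 0 1) k := rfl
    have hh : ellf a k y' = Λ y' k := rfl
    rw [hg, hh, hm, sub_self]
  have hunion : ((Finset.univ.filter fun k => ellf a k y ≠ 0) ∪ S).card ≤ s := by
    calc ((Finset.univ.filter fun k => ellf a k y ≠ 0) ∪ S).card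
        ≤ (Finset.univ : Finset (Fin s)).card := Finset.card_le_univ _
      _ = s := by rw [Finset.card_univ, Fintype.card_fin]
  rw [Finset.card_union_of_disjoint hdisjoint, hScard] at hunion
  omega

end

end StmtLower

end
end LowerBound

theorem stmt_10 (n : ℕ) (hn : 2 ≤ n)
    (F : MvPolynomial (Fin (n + 1)) ℂ)
    (hF : F = X 0 * (X 0 * X 1 + ∑ i : Fin (n + 1), if 2 ≤ (i : ℕ) then X i ^ 2 else 0)) :
    (∃ L : Fin (2 * n + 1) → MvPolynomial (Fin (n + 1)) ℂ,
      (∀ k, IsLinearForm (L k)) ∧ F = ∑ k, L k ^ 3) ∧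
    (∀ (s : ℕ) (L : Fin s → MvPolynomial (Fin (n + 1)) ℂ),
      (∀ k, IsLinearForm (L k)) → F = ∑ k, L k ^ 3 → 2 * n + 1 ≤ s) := by
  obtain ⟨m, rfl⟩ : ∃ m, n = m + 2 := ⟨n - 2, by omega⟩
  constructor
  · exact upper m F hF
  · intro s L hLin hdec
    choose a ha using hLin
    have hid : ∀ y : Fin (m + 1 + 2) → ℂ,
        (∑ k, (StmtLower.ellf a k y) ^ 3)
          = (y 0) ^ 2 * y 1 + y 0 * StmtLower.qb y y := by
      intro y
      calc (∑ k, (StmtLower.ellf a k y) ^ 3)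
          = ∑ k, (eval y (L k)) ^ 3 := by
            refine Finset.sum_congr rfl fun k _ => ?_
            congr 1
            rw [ha k, map_sum]
            unfold StmtLower.ellf
            refine Finset.sum_congr rfl fun i _ => ?_
            simp
        _ = eval y (∑ k, L k ^ 3) := by
            rw [map_sum]
            exact Finset.sum_congr rfl fun k _ => by rw [map_pow]
        _ = eval y F := by rw [← hdec]
        _ = y 0 * (y 0 * y 1 + ∑ i : Fin (m + 3),
              if 2 ≤ (i : ℕ) then (y i) ^ 2 else 0) := by
            rw [hF]
            simp [apply_ite (eval y)]
        _ = (y 0) ^ 2 * y 1 + y 0 * StmtLower.qb y y := by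
            unfold StmtLower.qb
            have hq : (∑ i : Fin (m + 3), if 2 ≤ (i : ℕ) then (y i) ^ 2 else 0)
                = ∑ i : Fin (m + 3), if 2 ≤ (i : ℕ) then y i * y i else 0 := by
              refine Finset.sum_congr rfl fun i _ => ?_
              split_ifs <;> ring
            rw [hq]
            ring
    exact StmtLower.lowerAux a hid
end

section
/- The complex Waring rank of the cubic form x₀(x₀² + x₁² + … + xₙ²) ∈ ℂ[x₀,…,xₙ] is exactly 2n. -/
open MvPolynomial

noncomputable section
variable {n s : ℕ}

/-- dot product over Fin (n+1) -/
def dot {n : ℕ} (u z : Fin (n+1) → ℂ) : ℂ := ∑ i, u i * z i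

lemma dot_add (u x y : Fin (n+1) → ℂ) : dot u (fun i => x i + y i) = dot u x + dot u y := by
  simp [dot, mul_add, Finset.sum_add_distrib]

/-- inner product on the "last n" coordinates -/
def inn {n : ℕ} (x y : Fin (n+1) → ℂ) : ℂ := ∑ j : Fin n, x j.succ * y j.succ

lemma inn_add_left (u v w : Fin (n+1) → ℂ) : inn (fun i => u i + v i) w = inn u w + inn v w := by
  simp [inn, add_mul, Finset.sum_add_distrib]

lemma inn_add_right (u v w : Fin (n+1) → ℂ) : inn u (fun i => v i + w i) = inn u v + inn u w := by
  simp [inn, mul_add, Finset.sum_add_distrib]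

lemma inn_comm (u v : Fin (n+1) → ℂ) : inn u v = inn v u := by
  simp [inn, mul_comm]

lemma dot_add2 (u x y : Fin (n+1) → ℂ) : dot u (x + y) = dot u x + dot u y := by
  simp [dot, Pi.add_apply, mul_add, Finset.sum_add_distrib]

lemma dot_smul2 (r : ℂ) (u x : Fin (n+1) → ℂ) : dot u (r • x) = r * dot u x := by
  simp only [dot, Pi.smul_apply, smul_eq_mul, Finset.mul_sum]
  exact Finset.sum_congr rfl (fun i _ => by ring)

lemma lower_core (n s : ℕ) (hn : 1 ≤ n) (a : Fin s → Fin (n+1) → ℂ)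
    (h : ∀ z : Fin (n+1) → ℂ, ∑ k, (∑ i, a k i * z i)^3 = z 0 * ∑ i, (z i)^2) :
    2*n ≤ s := by
  classical
  set T : Finset (Fin s) := Finset.univ.filter (fun k => ∃ j : Fin n, a k (j.succ) ≠ 0) with hT
  -- closed form for the sum over T of cubes
  set c : ℂ := 1 - ∑ k ∈ Finset.univ.filter (fun k => ¬ ∃ j : Fin n, a k (j.succ) ≠ 0), (a k 0)^3 with hc
  have hTc : ∀ k, k ∉ T → ∀ z, dot (a k) z = a k 0 * z 0 := by
    intro k hk z
    have hk' : ∀ j : Fin n, a k (j.succ) = 0 := by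
      simpa [hT] using hk
    rw [dot, Fin.sum_univ_succ]
    simp [hk']
  have hsplit : ∀ z : Fin (n+1) → ℂ, ∑ k ∈ T, (dot (a k) z)^3 = c * (z 0)^3 + z 0 * inn z z := by
    intro z
    have h0 := h z
    have hsum := Finset.sum_filter_add_sum_filter_not Finset.univ
      (fun k => ∃ j : Fin n, a k (j.succ) ≠ 0) (fun k => (dot (a k) z)^3)
    have h1 : ∑ k ∈ Finset.univ.filter (fun k => ¬ ∃ j : Fin n, a k (j.succ) ≠ 0), (dot (a k) z)^3
        = (∑ k ∈ Finset.univ.filter (fun k => ¬ ∃ j : Fin n, a k (j.succ) ≠ 0), (a k 0)^3) * (z 0)^3 := by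
      rw [Finset.sum_mul]
      apply Finset.sum_congr rfl
      intro k hk
      rw [hTc k (by simp [hT, Finset.mem_filter] at hk ⊢; exact hk) z]
      ring
    have h2 : ∑ k, (dot (a k) z)^3 = z 0 * ∑ i, (z i)^2 := by
      simpa [dot] using h0
    have h3 : z 0 * ∑ i, (z i)^2 = (z 0)^3 + z 0 * inn z z := by
      have hinn : inn z z = ∑ j : Fin n, (z j.succ)^2 := by simp [inn, sq]
      rw [Fin.sum_univ_succ, hinn]; ring
    rw [h3] at h2
    linear_combination hsum - h1 + h2 - (z 0)^3 * hc
  -- the symmetric trilinear moment form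
  set ψ : (Fin (n+1) → ℂ) → (Fin (n+1) → ℂ) → (Fin (n+1) → ℂ) → ℂ :=
    fun x y z => ∑ k ∈ T, (dot (a k) x) * ((dot (a k) y) * (dot (a k) z)) with hψ
  have psi_eq : ∀ x y z : Fin (n+1) → ℂ,
      ψ x y z = c * (x 0 * (y 0 * z 0))
        + (1/3) * (x 0 * inn y z + y 0 * inn x z + z 0 * inn x y) := by
    intro x y z
    have key : 6 * ψ x y z
        = (∑ k ∈ T, (dot (a k) (fun i => x i + (y i + z i)))^3)
          - (∑ k ∈ T, (dot (a k) (fun i => x i + y i))^3)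
          - (∑ k ∈ T, (dot (a k) (fun i => x i + z i))^3)
          - (∑ k ∈ T, (dot (a k) (fun i => y i + z i))^3)
          + (∑ k ∈ T, (dot (a k) x)^3) + (∑ k ∈ T, (dot (a k) y)^3)
          + (∑ k ∈ T, (dot (a k) z)^3) := by
      rw [hψ, Finset.mul_sum, ← Finset.sum_sub_distrib, ← Finset.sum_sub_distrib,
        ← Finset.sum_sub_distrib, ← Finset.sum_add_distrib, ← Finset.sum_add_distrib,
        ← Finset.sum_add_distrib]
      apply Finset.sum_congr rfl
      intro k _
      rw [dot_add, dot_add, dot_add, dot_add]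
      ring
    have e1 := hsplit (fun i => x i + (y i + z i))
    have e2 := hsplit (fun i => x i + y i)
    have e3 := hsplit (fun i => x i + z i)
    have e4 := hsplit (fun i => y i + z i)
    have e5 := hsplit x
    have e6 := hsplit y
    have e7 := hsplit z
    simp only [inn_add_left, inn_add_right, inn_comm y x, inn_comm z x, inn_comm z y] at e1 e2 e3 e4 e5 e6 e7
    linear_combination (1/6 : ℂ) * key + (1/6 : ℂ) * e1 - (1/6 : ℂ) * e2 - (1/6 : ℂ) * e3
      - (1/6 : ℂ) * e4 + (1/6 : ℂ) * e5 + (1/6 : ℂ) * e6 + (1/6 : ℂ) * e7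
  -- choose b avoiding the kernels
  have hb : ∃ b : Fin n → ℂ, ∀ k ∈ T, (∑ j : Fin n, a k j.succ * b j) ≠ 0 := by
    set P : MvPolynomial (Fin n) ℂ := ∏ k ∈ T, (∑ j : Fin n, C (a k j.succ) * X j) with hP
    have factor_ne : ∀ k ∈ T, (∑ j : Fin n, (C (a k j.succ) * X j : MvPolynomial (Fin n) ℂ)) ≠ 0 := by
      intro k hk h0
      obtain ⟨j0, hj0⟩ : ∃ j : Fin n, a k j.succ ≠ 0 := by simpa [hT] using hk
      apply hj0
      have h1 := congrArg (coeff (Finsupp.single j0 1)) h0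
      rw [coeff_zero, coeff_sum] at h1
      rw [Finset.sum_eq_single j0] at h1
      · simpa [coeff_C_mul, coeff_X'] using h1
      · intro j _ hj
        simp [coeff_C_mul, coeff_X', Finsupp.single_left_inj (one_ne_zero (α := ℕ)), hj]
      · simp
    have hPne : P ≠ 0 := Finset.prod_ne_zero_iff.mpr factor_ne
    obtain ⟨b, hbP⟩ : ∃ x : Fin n → ℂ, eval x P ≠ 0 := by
      by_contra hall
      push_neg at hall
      exact hPne (MvPolynomial.funext (q := 0) (fun x => by simp [hall x]))
    refine ⟨b, fun k hk => ?_⟩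
    rw [hP, map_prod] at hbP
    have := Finset.prod_ne_zero_iff.mp hbP k hk
    simpa using this
  obtain ⟨b, hbne⟩ := hb
  set B : Fin (n+1) → ℂ := Fin.cases 0 b with hB
  have hdotB : ∀ k, dot (a k) B = ∑ j : Fin n, a k j.succ * b j := by
    intro k
    rw [dot, Fin.sum_univ_succ]
    simp [hB]
  have hdotBne : ∀ k ∈ T, dot (a k) B ≠ 0 := fun k hk => by rw [hdotB]; exact hbne k hk
  -- basis vectors
  set ε : Fin (n+1) → (Fin (n+1) → ℂ) := fun m i => if i = m then 1 else 0 with hε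
  have hdotε : ∀ (u : Fin (n+1) → ℂ) (m : Fin (n+1)), dot u (ε m) = u m := by
    intro u m
    rw [dot]
    simp [hε, mul_ite]
  have hinnsucc : ∀ (u : Fin (n+1) → ℂ) (l : Fin n), inn u (ε l.succ) = u l.succ := by
    intro u l
    rw [inn]
    have : ∀ j : Fin n, u j.succ * (ε l.succ j.succ) = if j = l then u l.succ else 0 := by
      intro j
      by_cases hj : j = l <;> simp [hε, hj, Fin.succ_inj, mul_ite]
    simp only [this, Finset.sum_ite_eq' Finset.univ l, Finset.mem_univ, if_true]
  have hinnε0 : ∀ (u : Fin (n+1) → ℂ), inn (ε 0) u = 0 := by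
    intro u
    rw [inn]
    apply Finset.sum_eq_zero
    intro j _
    simp [hε, Fin.succ_ne_zero j]
  have hε00 : ε 0 0 = 1 := by simp [hε]
  have hεs0 : ∀ l : Fin n, ε l.succ 0 = 0 := by
    intro l; simp [hε, (Fin.succ_ne_zero l).symm, Ne.symm (Fin.succ_ne_zero l)]
  have hB0 : B 0 = 0 := by simp [hB]
  -- the linear map
  set Λ : ((Fin (n+1) → ℂ) × (Fin n → ℂ)) →ₗ[ℂ] (Fin s → ℂ) :=
    { toFun := fun p k => if k ∈ T then
        (dot (a k) B) * (dot (a k) p.1) + (a k 0) * (∑ j : Fin n, a k j.succ * p.2 j) else 0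
      map_add' := by
        intro p q
        funext k
        by_cases hk : k ∈ T
        · simp only [hk, if_true, Prod.fst_add, Prod.snd_add, Pi.add_apply, mul_add,
            Finset.sum_add_distrib, dot_add2]
          ring
        · simp [hk]
      map_smul' := by
        intro r p
        funext k
        by_cases hk : k ∈ T
        · simp only [hk, if_true, Prod.smul_fst, Prod.smul_snd, Pi.smul_apply, smul_eq_mul,
            RingHom.id_apply, dot_smul2]
          have hs : ∑ j : Fin n, a k j.succ * (r * p.2 j) = r * ∑ j : Fin n, a k j.succ * p.2 j := by
            rw [Finset.mul_sum]
            exact Finset.sum_congr rfl (fun j _ => by ring)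
          rw [hs]
          ring
        · simp [hk] } with hΛ
  have hΛapp : ∀ p k, Λ p k = if k ∈ T then
      (dot (a k) B) * (dot (a k) p.1) + (a k 0) * (∑ j : Fin n, a k j.succ * p.2 j) else 0 :=
    fun p k => rfl
  set κ : (Fin (n+1) → ℂ) × (Fin n → ℂ) := (ε 0, fun j => -(b j)) with hκdef
  have hker : LinearMap.ker Λ ≤ Submodule.span ℂ {κ} := by
    rintro ⟨lam, mu⟩ hp
    rw [LinearMap.mem_ker] at hp
    have hpk : ∀ k ∈ T, (dot (a k) B) * (dot (a k) lam)
        + (a k 0) * (∑ j : Fin n, a k j.succ * mu j) = 0 := by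
      intro k hk
      have := congrFun hp k
      rw [hΛapp] at this
      simpa [hk] using this
    -- Step 1 : mu l = -(lam 0 * b l)
    set mu' : Fin (n+1) → ℂ := Fin.cases 0 mu with hmu'
    have hmu'0 : mu' 0 = 0 := by simp [hmu']
    have hmu'l : ∀ l : Fin n, mu' l.succ = mu l := fun l => by simp [hmu']
    have hBsucc : ∀ l : Fin n, B l.succ = b l := fun l => by simp [hB]
    have hdmu : ∀ k, ∑ j : Fin n, a k j.succ * mu j = dot (a k) mu' := by
      intro k
      rw [dot, Fin.sum_univ_succ]
      simp [hmu']
    have hmu : ∀ l : Fin n, mu l = -(lam 0 * b l) := by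
      intro l
      have hpair : ∑ k ∈ T, ((dot (a k) B) * (dot (a k) lam)
          + (a k 0) * (∑ j : Fin n, a k j.succ * mu j)) * (dot (a k) (ε l.succ)) = 0 :=
        Finset.sum_eq_zero (fun k hk => by rw [hpk k hk, zero_mul])
      have hψsum : ψ B lam (ε l.succ) + ψ (ε 0) mu' (ε l.succ) = 0 := by
        rw [hψ]
        simp only
        rw [← Finset.sum_add_distrib, ← hpair]
        apply Finset.sum_congr rfl
        intro k hk
        rw [← hdmu k, ← hdotε (a k) 0]
        ring
      rw [psi_eq, psi_eq] at hψsum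
      simp only [hB0, hε00, hεs0, hinnε0, hinnsucc, hBsucc, hmu'0, hmu'l] at hψsum
      linear_combination 3 * hψsum
    -- Step 2
    have hlam : ∀ k ∈ T, dot (a k) lam = lam 0 * a k 0 := by
      intro k hk
      have h1 := hpk k hk
      have h2 : ∑ j : Fin n, a k j.succ * mu j = -(lam 0) * dot (a k) B := by
        rw [hdotB, Finset.mul_sum]
        apply Finset.sum_congr rfl
        intro j _
        rw [hmu j]; ring
      rw [h2] at h1
      have h3 : dot (a k) B * (dot (a k) lam - lam 0 * a k 0) = 0 := by linear_combination h1
      rcases mul_eq_zero.mp h3 with h4 | h4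
      · exact absurd h4 (hdotBne k hk)
      · linear_combination h4
    -- Step 3
    set ρ : Fin (n+1) → ℂ := fun i => lam i - lam 0 * ε 0 i with hρ
    have hρ0 : ρ 0 = 0 := by simp [hρ, hε00]
    have hε0s : ∀ j : Fin n, ε 0 j.succ = 0 := fun j => by simp [hε, Fin.succ_ne_zero j]
    have hρs : ∀ j : Fin n, ρ j.succ = lam j.succ := fun j => by simp [hρ, hε0s]
    have hdρ : ∀ k ∈ T, dot (a k) ρ = 0 := by
      intro k hk
      have hexp : dot (a k) ρ = dot (a k) lam - lam 0 * dot (a k) (ε 0) := by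
        simp only [dot, hρ, mul_sub, Finset.sum_sub_distrib, Finset.mul_sum]
        congr 1
        apply Finset.sum_congr rfl
        intro i _
        ring
      rw [hexp, hdotε, hlam k hk]
      ring
    have hlams : ∀ j : Fin n, lam j.succ = 0 := by
      intro j
      have hψ0 : ψ ρ (ε 0) (ε j.succ) = 0 := by
        rw [hψ]
        simp only
        apply Finset.sum_eq_zero
        intro k hk
        rw [hdρ k hk]
        ring
      rw [psi_eq] at hψ0
      simp only [hρ0, hε00, hεs0, hinnε0, hinnsucc, hρs] at hψ0
      linear_combination 3 * hψ0
    -- membership in the line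
    rw [Submodule.mem_span_singleton]
    refine ⟨lam 0, ?_⟩
    rw [hκdef, Prod.smul_mk]
    refine Prod.ext ?_ ?_
    · funext i
      induction i using Fin.cases with
      | zero => simp [hε00]
      | succ j => simp [hε0s j, hlams j]
    · funext j
      simp [hmu j]
  -- conclude by rank counting
  have hκne : κ ≠ 0 := by
    rw [hκdef]
    intro h0
    have h1 : ε 0 0 = (0 : ℂ) := congrFun (congrArg Prod.fst h0) 0
    rw [hε00] at h1
    exact one_ne_zero h1
  have hk1 : Module.finrank ℂ (LinearMap.ker Λ) ≤ 1 := by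
    have h1 := Submodule.finrank_mono hker
    rwa [finrank_span_singleton hκne] at h1
  have hrn := LinearMap.finrank_range_add_finrank_ker Λ
  have hdom : Module.finrank ℂ ((Fin (n+1) → ℂ) × (Fin n → ℂ)) = 2*n+1 := by
    rw [Module.finrank_prod, Module.finrank_pi, Module.finrank_pi, Fintype.card_fin,
      Fintype.card_fin]
    omega
  have hra : Module.finrank ℂ (LinearMap.range Λ) ≤ s := by
    have h1 := Submodule.finrank_le (LinearMap.range Λ)
    rwa [Module.finrank_pi, Fintype.card_fin] at h1
  rw [hdom] at hrn
  omega


lemma lin2 {n : ℕ} (u sg : ℂ) (m : Fin (n+1)) (hm : m ≠ 0) :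
    (∑ i, C (if i = 0 then u else if i = m then sg else 0) * X i : MvPolynomial (Fin (n+1)) ℂ)
      = C u * X 0 + C sg * X m := by
  have hsplit : ∀ i ∈ Finset.univ,
      (C (if i = 0 then u else if i = m then sg else 0) * X i : MvPolynomial (Fin (n+1)) ℂ)
        = (if i = 0 then C u * X 0 else 0) + (if i = m then C sg * X m else 0) := by
    intro i _
    by_cases h0 : i = 0
    · subst h0
      simp [Ne.symm hm]
    · by_cases hm' : i = m
      · subst hm'
        simp [h0]
      · simp [h0, hm']
  rw [Finset.sum_congr rfl hsplit, Finset.sum_add_distrib,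
    Finset.sum_ite_eq' Finset.univ (0 : Fin (n+1)), Finset.sum_ite_eq' Finset.univ m]
  simp

end

theorem stmt_11 (n : ℕ) (hn : 1 ≤ n)
    (F : MvPolynomial (Fin (n + 1)) ℂ)
    (hF : F = X 0 * ∑ i, X i ^ 2) :
    (∃ L : Fin (2 * n) → MvPolynomial (Fin (n + 1)) ℂ,
      (∀ k, IsLinearForm (L k)) ∧ F = ∑ k, L k ^ 3) ∧
    (∀ (s : ℕ) (L : Fin s → MvPolynomial (Fin (n + 1)) ℂ),
      (∀ k, IsLinearForm (L k)) → F = ∑ k, L k ^ 3 → 2 * n ≤ s) := by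
  constructor
  · -- upper bound
    have h2n : ((2*n : ℕ) : ℂ) ≠ 0 := Nat.cast_ne_zero.mpr (by omega)
    obtain ⟨α, hα⟩ := IsAlgClosed.exists_pow_nat_eq (k := ℂ) (((2*n : ℕ) : ℂ))⁻¹ (n := 3) (by norm_num)
    have hαne : α ≠ 0 := by
      intro h0
      rw [h0, zero_pow (by norm_num)] at hα
      exact h2n (inv_eq_zero.mp hα.symm)
    obtain ⟨β, hβ⟩ := IsAlgClosed.exists_pow_nat_eq (k := ℂ) ((6*α)⁻¹) (n := 2) (by norm_num)
    set sgn : Fin 2 → ℂ := fun j => if j = 0 then β else -β with hsgn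
    set L : Fin (2*n) → MvPolynomial (Fin (n+1)) ℂ := fun k =>
      C α * X 0 + C (sgn (finProdFinEquiv.symm k).1) * X ((finProdFinEquiv.symm k).2).succ with hL
    refine ⟨L, fun k => ?_, ?_⟩
    · exact ⟨fun i => if i = 0 then α else if i = ((finProdFinEquiv.symm k).2).succ
        then sgn (finProdFinEquiv.symm k).1 else 0,
        (lin2 _ _ _ (Fin.succ_ne_zero _)).symm⟩
    · have hsum2 : ∑ k : Fin (2*n), (L k)^3
          = ∑ p : Fin 2 × Fin n, (C α * X 0 + C (sgn p.1) * X p.2.succ)^3 := by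
        rw [← Equiv.sum_comp (finProdFinEquiv : Fin 2 × Fin n ≃ Fin (2*n))
          (fun k => (L k)^3)]
        apply Finset.sum_congr rfl
        intro p _
        rw [hL]
        simp
      rw [hF, hsum2, Fintype.sum_prod_type, Fin.sum_univ_two, ← Finset.sum_add_distrib]
      have percube : ∀ i : Fin n,
          (C α * X 0 + C (sgn 0) * X i.succ)^3 + (C α * X 0 + C (sgn 1) * X i.succ)^3
          = C ((2:ℂ)*α^3) * X 0^3
            + C ((6:ℂ)*α*β^2) * (X 0 * X i.succ^2 : MvPolynomial (Fin (n+1)) ℂ) := by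
        intro i
        have h0 : sgn 0 = β := by simp [hsgn]
        have h1 : sgn 1 = -β := by simp [hsgn]
        rw [h0, h1]
        simp only [map_neg, map_mul, map_pow, map_ofNat]
        ring
      rw [Finset.sum_congr rfl (fun i _ => percube i), Finset.sum_add_distrib,
        Finset.sum_const, Finset.card_univ, Fintype.card_fin, ← Finset.mul_sum]
      have hc2 : ((6:ℂ)*α*β^2) = 1 := by
        rw [hβ]
        field_simp
      have hc1 : n • (C ((2:ℂ)*α^3) * X 0^3 : MvPolynomial (Fin (n+1)) ℂ) = X 0 ^3 := by
        rw [nsmul_eq_mul, show ((n:ℕ) : MvPolynomial (Fin (n+1)) ℂ) = C ((n:ℕ):ℂ) by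
          simp, ← mul_assoc, ← map_mul]
        have hnne : ((n:ℕ):ℂ) ≠ 0 := Nat.cast_ne_zero.mpr (by omega)
        have : ((n:ℕ):ℂ) * ((2:ℂ)*α^3) = 1 := by
          rw [hα]
          push_cast
          field_simp
        rw [this, map_one, one_mul]
      rw [hc1, hc2, map_one, one_mul, Fin.sum_univ_succ, mul_add, Finset.mul_sum]
      ring_nf
  · -- lower bound
    intro s L hL hsum
    rw [hF] at hsum
    choose aa haa using hL
    apply lower_core n s hn aa
    intro z
    have h1 : eval z (X 0 * ∑ i, X i ^ 2 : MvPolynomial (Fin (n+1)) ℂ)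
        = z 0 * ∑ i, (z i)^2 := by simp
    have h2 : eval z (∑ k, L k ^ 3 : MvPolynomial (Fin (n+1)) ℂ)
        = ∑ k, (∑ i, aa k i * z i)^3 := by
      rw [map_sum]
      apply Finset.sum_congr rfl
      intro k _
      rw [map_pow, haa k]
      simp [mul_comm]
    rw [← h2, ← hsum, h1]
end
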